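/- Under the assumptions: unique-best-prediction margin c (i.e., η̂_{y*}^T h(x,s) - η̂_y^T h(x,s) > c‖η̂‖₂ for all y ≠ y*), penultimate features bounded by β, and marginal probabilities p(y|x;θ̂) ≥ 1/b for all y with b ≥ k, the likelihood gap between the unconstrained MLE θ̂ and the MLE θ̂_δ constrained to V(D;θ) ≤ δ satisfies Δ_l(θ̂, θ̂_δ) = (1/n)(l(D;θ̂) - l(D;θ̂_δ)) ≤ c₁ β² (‖η̂‖₂ - δ/(4β))² e^{-c₂ δ/(4β)}, where c₁ = 2dk(k-1)(b+1) and c₂ = c, provided δ/(4β) ≤ ‖η̂‖₂. -/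

import Mathlib

/-!
Compare `θ̂_δ` with the feasible point `(λ̂, t • η̂)`, `t = α / ‖η̂‖₂`, `α = δ / (4β)`.

Feasibility: each softmax coordinate is `1/2`-Lipschitz for the sup norm of the logits (its
derivative along `w` is `p_y (w_y - E_p w)`, at most `p_y (1 - p_y) · osc w`). At scale `t` the
logits of the stochastic and deterministic features are `δ/2`-close, so each marginal is within
`δ/4` of its deterministic value, and the squared deviations of two probability vectors sum to at
most `(δ/4) · 2`.

Curvature: `L(t) = l(λ̂, t • η̂)` is maximal at `t = 1`. Per sample,
`(log ∫ p_t)'' = Var_q X - E_q[Var_{p_t} w]` with `q ∝ p_t` and `X = w_y - E_{p_t} w`, so it is at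
least `-sup Var_{p_t} w`; under the margin every wrong class has `p_t ≤ e^{-tc‖η̂‖₂}`, whence
`Var_{p_t} w ≤ (k - 1)(2β‖η̂‖₂)² e^{-tc‖η̂‖₂}`. Taylor's bound at the critical point `t = 1` gives
`L(1) - L(t) ≤ 2n(k - 1)β²(‖η̂‖₂ - α)² e^{-cα}`.
-/

open MeasureTheory Finset

/-- Softmax over `k` classes with parameters `η` applied to features `u`. -/
noncomputable def smax {k d : ℕ} (η : Fin k → Fin d → ℝ) (u : Fin d → ℝ) (y : Fin k) : ℝ :=
  Real.exp (∑ i, η y i * u i) / ∑ y', Real.exp (∑ i, η y' i * u i)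

noncomputable def softmax {ι : Type*} [Fintype ι] (z : ι → ℝ) (y : ι) : ℝ :=
  Real.exp (z y) / ∑ y', Real.exp (z y')

section Softmax

variable {ι : Type*} [Fintype ι]

noncomputable def softmaxMean (z w : ι → ℝ) : ℝ := ∑ y, softmax z y * w y

noncomputable def softmaxVar (z w : ι → ℝ) : ℝ :=
  ∑ y, softmax z y * (w y - softmaxMean z w) ^ 2

variable {z w : ι → ℝ}

lemma sum_exp_pos (y : ι) : 0 < ∑ y', Real.exp (z y') :=
  Finset.sum_pos (fun _ _ => Real.exp_pos _) ⟨y, mem_univ y⟩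

lemma softmax_pos (y : ι) : 0 < softmax z y := div_pos (Real.exp_pos _) (sum_exp_pos y)

lemma softmax_nonneg (y : ι) : 0 ≤ softmax z y := (softmax_pos y).le

lemma sum_softmax [Nonempty ι] : ∑ y, softmax z y = 1 := by
  simp only [softmax, ← Finset.sum_div]
  exact div_self (sum_exp_pos (Classical.arbitrary ι)).ne'

lemma sum_softmax_le_one : ∑ y, softmax z y ≤ 1 := by
  cases isEmpty_or_nonempty ι
  · simp
  · exact sum_softmax.le

lemma softmax_le_one (y : ι) : softmax z y ≤ 1 :=
  (Finset.single_le_sum (fun y _ => softmax_nonneg (z := z) y) (mem_univ y)).trans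
    sum_softmax_le_one

lemma abs_softmax_mul_le {a D : ℝ} (h : |a| ≤ D) (z : ι → ℝ) (y : ι) :
    |softmax z y * a| ≤ D := by
  rw [abs_mul, abs_of_nonneg (softmax_nonneg y)]
  exact (mul_le_of_le_one_left (abs_nonneg a) (softmax_le_one y)).trans h

lemma softmax_le_exp_sub (y y' : ι) : softmax z y ≤ Real.exp (z y - z y') := by
  rw [softmax, Real.exp_sub]
  exact div_le_div_of_nonneg_left (Real.exp_pos _).le (Real.exp_pos _)
    (Finset.single_le_sum (fun y _ => (Real.exp_pos (z y)).le) (mem_univ y'))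

lemma softmax_add_const (r : ℝ) : softmax (fun y => z y + r) = softmax z := by
  funext y
  simp only [softmax, Real.exp_add, ← Finset.sum_mul]
  exact mul_div_mul_right _ _ (Real.exp_pos r).ne'

lemma log_softmax_sub_log_softmax (y y' : ι) :
    Real.log (softmax z y) - Real.log (softmax z y') = z y - z y' := by
  rw [softmax, softmax, Real.log_div (Real.exp_pos _).ne' (sum_exp_pos y).ne',
    Real.log_div (Real.exp_pos _).ne' (sum_exp_pos y).ne', Real.log_exp, Real.log_exp]
  ring

section Continuity

variable {X : Type*} [TopologicalSpace X] {f g : X → ι → ℝ}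

@[fun_prop]
lemma Continuous.softmax (hf : Continuous f) (y : ι) : Continuous fun x => softmax (f x) y :=
  ((continuous_apply y).comp hf).rexp.div
    (continuous_finsetSum _ fun y' _ => ((continuous_apply y').comp hf).rexp)
    fun _ => (sum_exp_pos y).ne'

@[fun_prop]
lemma Continuous.softmaxMean (hf : Continuous f) (hg : Continuous g) :
    Continuous fun x => softmaxMean (f x) (g x) :=
  continuous_finsetSum _ fun y _ => (hf.softmax y).mul ((continuous_apply y).comp hg)

@[fun_prop]
lemma Continuous.softmaxVar (hf : Continuous f) (hg : Continuous g) :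
    Continuous fun x => softmaxVar (f x) (g x) :=
  continuous_finsetSum _ fun y _ => (hf.softmax y).mul
    ((((continuous_apply y).comp hg).sub (hf.softmaxMean hg)).pow 2)

end Continuity

lemma sub_softmaxMean (y : ι) : w y - softmaxMean z w = ∑ y', softmax z y' * (w y - w y') := by
  have : Nonempty ι := ⟨y⟩
  simp only [softmaxMean, mul_sub, Finset.sum_sub_distrib, ← Finset.sum_mul, sum_softmax, one_mul]

lemma abs_sub_softmaxMean_le {D : ℝ} (y : ι) (hD : ∀ y', |w y - w y'| ≤ D) :
    |w y - softmaxMean z w| ≤ (1 - softmax z y) * D := by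
  classical
  have : Nonempty ι := ⟨y⟩
  rw [sub_softmaxMean y, ← Finset.sum_erase_add _ _ (mem_univ y), sub_self, mul_zero, add_zero,
    ← sum_softmax (z := z), ← Finset.sum_erase_add _ _ (mem_univ y), add_sub_cancel_right,
    Finset.sum_mul]
  refine (Finset.abs_sum_le_sum_abs _ _).trans (Finset.sum_le_sum fun y' _ => ?_)
  rw [abs_mul, abs_of_nonneg (softmax_nonneg y')]
  exact mul_le_mul_of_nonneg_left (hD y') (softmax_nonneg y')

lemma abs_sub_softmaxMean_le_of_osc {D : ℝ} (hD : ∀ y y', |w y - w y'| ≤ D) (y : ι) :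
    |w y - softmaxMean z w| ≤ D := by
  have hD₀ : 0 ≤ D := (abs_nonneg _).trans (hD y y)
  refine (abs_sub_softmaxMean_le y (hD y)).trans ?_
  nlinarith [softmax_nonneg (z := z) y]

lemma sq_sub_softmaxMean_le_of_osc {D : ℝ} (hD : ∀ y y', |w y - w y'| ≤ D) (y : ι) :
    (w y - softmaxMean z w) ^ 2 ≤ D ^ 2 :=
  sq_le_sq.2 ((abs_sub_softmaxMean_le_of_osc hD y).trans (le_abs_self D))

lemma softmaxVar_nonneg : 0 ≤ softmaxVar z w :=
  Finset.sum_nonneg fun y _ => mul_nonneg (softmax_nonneg y) (sq_nonneg _)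

lemma softmaxVar_le_sq {D : ℝ} (hD : ∀ y y', |w y - w y'| ≤ D) : softmaxVar z w ≤ D ^ 2 := by
  refine (Finset.sum_le_sum fun y _ =>
    mul_le_mul_of_nonneg_left (sq_sub_softmaxMean_le_of_osc hD y) (softmax_nonneg y)).trans ?_
  rw [← Finset.sum_mul]
  exact mul_le_of_le_one_left (sq_nonneg D) sum_softmax_le_one

lemma abs_sq_sub_softmaxMean_sub_softmaxVar_le {D : ℝ} (hD : ∀ y y', |w y - w y'| ≤ D)
    (y : ι) : |(w y - softmaxMean z w) ^ 2 - softmaxVar z w| ≤ D ^ 2 := by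
  rw [abs_le]
  constructor <;> nlinarith [sq_nonneg (w y - softmaxMean z w), softmaxVar_nonneg (z := z) (w := w),
    sq_sub_softmaxMean_le_of_osc (z := z) hD y, softmaxVar_le_sq (z := z) hD]

lemma softmaxVar_le_sum_sq_sub (c : ℝ) :
    softmaxVar z w ≤ ∑ y, softmax z y * (w y - c) ^ 2 := by
  cases isEmpty_or_nonempty ι
  · simp [softmaxVar]
  have hsplit : ∑ y, softmax z y * (w y - c) ^ 2
      = softmaxVar z w + (softmaxMean z w - c) ^ 2 := by
    have h : ∀ y, softmax z y * (w y - c) ^ 2 = softmax z y * (w y - softmaxMean z w) ^ 2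
        + 2 * (softmaxMean z w - c) * (softmax z y * w y)
        + ((c ^ 2 - softmaxMean z w ^ 2) * softmax z y) := fun y => by ring
    simp only [h, Finset.sum_add_distrib, ← Finset.mul_sum, sum_softmax]
    rw [← softmaxVar, ← softmaxMean]
    ring
  rw [hsplit]
  exact le_add_of_nonneg_right (sq_nonneg _)

lemma softmaxVar_le_of_margin {D g t : ℝ} (ht : 0 ≤ t) (hD : ∀ y y', |w y - w y'| ≤ D)
    {ystar : ι} (hg : ∀ y ≠ ystar, w y + g ≤ w ystar) :
    softmaxVar (t • w) w ≤ (Fintype.card ι - 1 : ℕ) * D ^ 2 * Real.exp (-(t * g)) := by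
  classical
  refine (softmaxVar_le_sum_sq_sub (w ystar)).trans ?_
  rw [← Finset.sum_erase_add _ _ (mem_univ ystar), sub_self, zero_pow two_ne_zero, mul_zero,
    add_zero, ← Finset.card_univ, ← Finset.card_erase_of_mem (mem_univ ystar), mul_assoc,
    ← nsmul_eq_mul, ← Finset.sum_const]
  refine Finset.sum_le_sum fun y hy => ?_
  have hp : softmax (t • w) y ≤ Real.exp (-(t * g)) := by
    refine (softmax_le_exp_sub y ystar).trans (Real.exp_le_exp.2 ?_)
    simp only [Pi.smul_apply, smul_eq_mul]
    nlinarith [hg y (Finset.ne_of_mem_erase hy)]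
  rw [mul_comm (D ^ 2)]
  exact mul_le_mul hp (sq_le_sq.2 ((hD y ystar).trans (le_abs_self D))) (sq_nonneg _)
    (Real.exp_pos _).le

lemma hasDerivAt_softmax_add_smul (c w : ι → ℝ) (y : ι) (t : ℝ) :
    HasDerivAt (fun t => softmax (c + t • w) y)
      (softmax (c + t • w) y * (w y - softmaxMean (c + t • w) w)) t := by
  have hexp : ∀ y', HasDerivAt (fun t => Real.exp ((c + t • w) y'))
      (Real.exp ((c + t • w) y') * w y') t := fun y' => by
    simpa using ((hasDerivAt_mul_const (w y')).const_add (c y')).exp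
  have hsum := HasDerivAt.fun_sum fun y' (_ : y' ∈ univ) => hexp y'
  refine ((hexp y).div hsum (sum_exp_pos y).ne').congr_deriv ?_
  have hS := (sum_exp_pos (z := c + t • w) y).ne'
  simp only [softmaxMean, softmax, div_mul_eq_mul_div, ← Finset.sum_div]
  field_simp

lemma hasDerivAt_softmaxMean_add_smul (c w : ι → ℝ) (t : ℝ) :
    HasDerivAt (fun t => softmaxMean (c + t • w) w) (softmaxVar (c + t • w) w) t := by
  refine (HasDerivAt.fun_sum fun y (_ : y ∈ univ) =>
    (hasDerivAt_softmax_add_smul c w y t).mul_const (w y)).congr_deriv ?_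
  cases isEmpty_or_nonempty ι
  · simp [softmaxVar]
  have hzero : ∑ y, softmax (c + t • w) y * (w y - softmaxMean (c + t • w) w) = 0 := by
    simp only [mul_sub, Finset.sum_sub_distrib, ← Finset.sum_mul, sum_softmax, one_mul]
    exact sub_eq_zero.2 rfl
  rw [softmaxVar, ← sub_zero (∑ y, _ * _ * w y), ← mul_zero (softmaxMean (c + t • w) w), ← hzero,
    Finset.mul_sum, ← Finset.sum_sub_distrib]
  exact Finset.sum_congr rfl fun y _ => by ring

lemma hasDerivAt_softmax_smul (w : ι → ℝ) (y : ι) (t : ℝ) :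
    HasDerivAt (fun t => softmax (t • w) y)
      (softmax (t • w) y * (w y - softmaxMean (t • w) w)) t := by
  simpa using hasDerivAt_softmax_add_smul 0 w y t

lemma hasDerivAt_softmax_smul_mul_sub_softmaxMean (w : ι → ℝ) (y : ι) (t : ℝ) :
    HasDerivAt (fun t => softmax (t • w) y * (w y - softmaxMean (t • w) w))
      (softmax (t • w) y * ((w y - softmaxMean (t • w) w) ^ 2 - softmaxVar (t • w) w)) t := by
  have hm : HasDerivAt (fun t => softmaxMean (t • w) w) (softmaxVar (t • w) w) t := by
    simpa using hasDerivAt_softmaxMean_add_smul 0 w t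
  exact ((hasDerivAt_softmax_smul w y t).mul (hm.const_sub (w y))).congr_deriv (by ring)

lemma abs_softmax_sub_softmax_le (z z' : ι → ℝ) (y : ι) :
    |softmax z y - softmax z' y| ≤ ‖z - z'‖ / 2 := by
  have hosc : ∀ y', |(z - z') y - (z - z') y'| ≤ 2 * ‖z - z'‖ := fun y' => by
    have h₁ := norm_le_pi_norm (z - z') y
    have h₂ := norm_le_pi_norm (z - z') y'
    rw [Real.norm_eq_abs] at h₁ h₂
    linarith [abs_sub ((z - z') y) ((z - z') y')]
  have h := norm_image_sub_le_of_norm_deriv_le_segment_01'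
    (f := fun t => softmax (z' + t • (z - z')) y)
    (fun t _ => (hasDerivAt_softmax_add_smul z' (z - z') y t).hasDerivWithinAt) fun t _ => by
      set p := softmax (z' + t • (z - z')) y
      rw [Real.norm_eq_abs, abs_mul, abs_of_nonneg (softmax_nonneg y)]
      calc p * |_| ≤ p * ((1 - p) * (2 * ‖z - z'‖)) :=
            mul_le_mul_of_nonneg_left (abs_sub_softmaxMean_le y hosc) (softmax_nonneg y)
        _ ≤ ‖z - z'‖ / 2 := by nlinarith [sq_nonneg (p - 1 / 2), norm_nonneg (z - z')]
  simpa using h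

end Softmax

section Integral

variable {Ω : Type*} [MeasurableSpace Ω] {μ : Measure Ω}

lemma sq_integral_mul_le_integral_mul_integral_mul_sq {p X : Ω → ℝ} (hp : ∀ s, 0 ≤ p s)
    (hpi : Integrable p μ) (hpX : Integrable (fun s => p s * X s) μ)
    (hpX2 : Integrable (fun s => p s * X s ^ 2) μ) :
    (∫ s, p s * X s ∂μ) ^ 2 ≤ (∫ s, p s ∂μ) * ∫ s, p s * X s ^ 2 ∂μ := by
  have hquad : ∀ r : ℝ, 0 ≤ (∫ s, p s ∂μ) * (r * r) + (-2 * ∫ s, p s * X s ∂μ) * r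
      + ∫ s, p s * X s ^ 2 ∂μ := fun r => by
    have hexp : (fun s => p s * (X s - r) ^ 2)
        = fun s => p s * X s ^ 2 + (-2 * r) * (p s * X s) + (r * r) * p s := by
      funext s; ring
    have h : 0 ≤ ∫ s, p s * (X s - r) ^ 2 ∂μ :=
      integral_nonneg fun s => mul_nonneg (hp s) (sq_nonneg (X s - r))
    rw [hexp, integral_add (hpX2.fun_add (hpX.const_mul _)) (hpi.const_mul _),
      integral_add hpX2 (hpX.const_mul _), integral_const_mul, integral_const_mul] at h
    linarith
  have h := discrim_le_zero hquad
  rw [discrim] at h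
  linarith

/-- The quotient is `Var_q X - E_q V` for `q = p / ∫ p`. -/
lemma neg_le_integral_mul_sq_sub_div_sq {p X V : Ω → ℝ} {K : ℝ} (hp : ∀ s, 0 ≤ p s)
    (hP : 0 < ∫ s, p s ∂μ) (hpi : Integrable p μ) (hpX : Integrable (fun s => p s * X s) μ)
    (hpX2 : Integrable (fun s => p s * X s ^ 2) μ) (hpV : Integrable (fun s => p s * V s) μ)
    (hVK : ∀ s, V s ≤ K) :
    -K ≤ ((∫ s, p s * (X s ^ 2 - V s) ∂μ) * (∫ s, p s ∂μ)
      - (∫ s, p s * X s ∂μ) * ∫ s, p s * X s ∂μ) / (∫ s, p s ∂μ) ^ 2 := by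
  have hCS := sq_integral_mul_le_integral_mul_integral_mul_sq hp hpi hpX hpX2
  have hsplit : ∫ s, p s * (X s ^ 2 - V s) ∂μ
      = (∫ s, p s * X s ^ 2 ∂μ) - ∫ s, p s * V s ∂μ := by
    rw [← integral_sub hpX2 hpV]
    simp only [mul_sub]
  have hV : ∫ s, p s * V s ∂μ ≤ K * ∫ s, p s ∂μ := by
    rw [← integral_const_mul]
    exact integral_mono hpV (hpi.const_mul K) fun s => by
      rw [mul_comm K]; exact mul_le_mul_of_nonneg_left (hVK s) (hp s)
  rw [le_div_iff₀ (pow_pos hP 2), hsplit]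
  nlinarith [mul_le_mul_of_nonneg_left hV hP.le]

lemma integrable_of_forall_abs_le [IsFiniteMeasure μ] {f : Ω → ℝ} {C : ℝ}
    (hf : AEStronglyMeasurable f μ) (hC : ∀ s, |f s| ≤ C) : Integrable f μ :=
  Integrable.of_bound hf C (ae_of_all _ fun s => (Real.norm_eq_abs _).trans_le (hC s))

lemma hasDerivAt_integral_of_abs_deriv_le [IsFiniteMeasure μ] {F F' : ℝ → Ω → ℝ} {C : ℝ}
    (hF : ∀ t, Integrable (F t) μ) (hF' : ∀ t, AEStronglyMeasurable (F' t) μ)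
    (hF'C : ∀ t s, |F' t s| ≤ C) (hd : ∀ t s, HasDerivAt (F · s) (F' t s) t) (t : ℝ) :
    HasDerivAt (fun t => ∫ s, F t s ∂μ) (∫ s, F' t s ∂μ) t :=
  (hasDerivAt_integral_of_dominated_loc_of_deriv_le (bound := fun _ => C) Filter.univ_mem
    (Filter.Eventually.of_forall fun t => (hF t).1) (hF t) (hF' t)
    (ae_of_all _ fun s x _ => hF'C x s) (integrable_const C) (ae_of_all _ fun s x _ => hd x s)).2

end Integral

section LogIntegralSoftmax

variable {Ω ι : Type*} [MeasurableSpace Ω] [Fintype ι] {μ : Measure Ω} [IsProbabilityMeasure μ]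
  {w : Ω → ι → ℝ} {D : ℝ}

lemma integrable_softmax_mul {z : Ω → ι → ℝ} {f : Ω → ℝ} {C : ℝ}
    (hz : AEStronglyMeasurable z μ) (hf : AEStronglyMeasurable f μ) (hC : ∀ s, |f s| ≤ C)
    (y : ι) : Integrable (fun s => softmax (z s) y * f s) μ :=
  integrable_of_forall_abs_le (by fun_prop) fun s => abs_softmax_mul_le (hC s) _ _

lemma integrable_softmax {z : Ω → ι → ℝ} (hz : AEStronglyMeasurable z μ) (y : ι) :
    Integrable (fun s => softmax (z s) y) μ := by
  simpa using integrable_softmax_mul hz aestronglyMeasurable_const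
    (fun _ => (abs_one (α := ℝ)).le) y

lemma integral_softmax_pos {z : Ω → ι → ℝ} (hz : AEStronglyMeasurable z μ) (y : ι) :
    0 < ∫ s, softmax (z s) y ∂μ := by
  rw [integral_pos_iff_support_of_nonneg (fun s => softmax_nonneg y) (integrable_softmax hz y),
    Function.support_eq_univ fun s => (softmax_pos y).ne']
  simp

lemma hasDerivAt_integral_softmax_smul (hw : AEStronglyMeasurable w μ)
    (hD : ∀ s y y', |w s y - w s y'| ≤ D) (y₀ : ι) (t : ℝ) :
    HasDerivAt (fun t => ∫ s, softmax (t • w s) y₀ ∂μ)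
      (∫ s, softmax (t • w s) y₀ * (w s y₀ - softmaxMean (t • w s) (w s)) ∂μ) t :=
  hasDerivAt_integral_of_abs_deriv_le (fun t => integrable_softmax (by fun_prop) y₀)
    (fun t => by fun_prop)
    (fun t s => abs_softmax_mul_le (abs_sub_softmaxMean_le_of_osc (hD s) y₀) _ _)
    (fun t s => hasDerivAt_softmax_smul (w s) y₀ t) t

lemma hasDerivAt_integral_softmax_smul_mul_sub_softmaxMean (hw : AEStronglyMeasurable w μ)
    (hD : ∀ s y y', |w s y - w s y'| ≤ D) (y₀ : ι) (t : ℝ) :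
    HasDerivAt (fun t => ∫ s, softmax (t • w s) y₀ * (w s y₀ - softmaxMean (t • w s) (w s)) ∂μ)
      (∫ s, softmax (t • w s) y₀ *
        ((w s y₀ - softmaxMean (t • w s) (w s)) ^ 2 - softmaxVar (t • w s) (w s)) ∂μ) t :=
  hasDerivAt_integral_of_abs_deriv_le
    (fun t => integrable_softmax_mul (by fun_prop) (by fun_prop)
      (fun s => abs_sub_softmaxMean_le_of_osc (hD s) y₀) y₀)
    (fun t => by fun_prop)
    (fun t s => abs_softmax_mul_le (abs_sq_sub_softmaxMean_sub_softmaxVar_le (hD s) y₀) _ _)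
    (fun t s => hasDerivAt_softmax_smul_mul_sub_softmaxMean (w s) y₀ t) t

theorem exists_hasDerivAt_log_integral_softmax_smul (hw : AEStronglyMeasurable w μ)
    (hD : ∀ s y y', |w s y - w s y'| ≤ D) (y₀ : ι) :
    ∃ G' G'' : ℝ → ℝ,
      (∀ t, HasDerivAt (fun t => Real.log (∫ s, softmax (t • w s) y₀ ∂μ)) (G' t) t) ∧
      (∀ t, HasDerivAt G' (G'' t) t) ∧
      ∀ t K, (∀ s, softmaxVar (t • w s) (w s) ≤ K) → -K ≤ G'' t := by
  set P := fun t : ℝ => ∫ s, softmax (t • w s) y₀ ∂μ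
  set P₁ := fun t : ℝ => ∫ s, softmax (t • w s) y₀ * (w s y₀ - softmaxMean (t • w s) (w s)) ∂μ
  set P₂ := fun t : ℝ => ∫ s, softmax (t • w s) y₀ *
    ((w s y₀ - softmaxMean (t • w s) (w s)) ^ 2 - softmaxVar (t • w s) (w s)) ∂μ
  have hP : ∀ t, HasDerivAt P (P₁ t) t := hasDerivAt_integral_softmax_smul hw hD y₀
  have hP₁ : ∀ t, HasDerivAt P₁ (P₂ t) t :=
    hasDerivAt_integral_softmax_smul_mul_sub_softmaxMean hw hD y₀
  have hPpos : ∀ t, 0 < P t := fun t => integral_softmax_pos (by fun_prop) y₀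
  refine ⟨fun t => P₁ t / P t, fun t => (P₂ t * P t - P₁ t * P₁ t) / P t ^ 2,
    fun t => (hP t).log (hPpos t).ne', fun t => (hP₁ t).div (hP t) (hPpos t).ne',
    fun t K hK => ?_⟩
  have hX := fun s => abs_sub_softmaxMean_le_of_osc (z := t • w s) (hD s) y₀
  exact neg_le_integral_mul_sq_sub_div_sq (fun s => softmax_nonneg y₀) (hPpos t)
    (integrable_softmax (by fun_prop) y₀)
    (integrable_softmax_mul (by fun_prop) (by fun_prop) hX y₀)
    (integrable_softmax_mul (by fun_prop) (by fun_prop)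
      (fun s => (abs_of_nonneg (sq_nonneg _)).trans_le
        (sq_sub_softmaxMean_le_of_osc (z := t • w s) (hD s) y₀)) y₀)
    (integrable_softmax_mul (by fun_prop) (by fun_prop)
      (fun s => (abs_of_nonneg softmaxVar_nonneg).trans_le (softmaxVar_le_sq (hD s))) y₀) hK

end LogIntegralSoftmax

/-- `t ↦ G t + K/2 (t - b)²` is convex on `[a, b]` with a critical point at `b`, so it is
antitone there. -/
lemma sub_le_of_deriv_eq_zero_of_le_deriv2 {G G' G'' : ℝ → ℝ} {a b K : ℝ} (hab : a ≤ b)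
    (hG : ∀ t, HasDerivAt G (G' t) t) (hG' : ∀ t, HasDerivAt G' (G'' t) t) (hb : G' b = 0)
    (hK : ∀ t ∈ Set.Icc a b, -K ≤ G'' t) :
    G b - G a ≤ K / 2 * (b - a) ^ 2 := by
  have hH : ∀ t, HasDerivAt (fun t => G t + K / 2 * (t - b) ^ 2) (G' t + K * (t - b)) t :=
    fun t => ((hG t).add ((((hasDerivAt_id t).sub_const b).pow 2).const_mul (K / 2))).congr_deriv
      (by simp; ring)
  have hH' : ∀ t, HasDerivAt (fun t => G' t + K * (t - b)) (G'' t + K) t :=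
    fun t => ((hG' t).add (((hasDerivAt_id t).sub_const b).const_mul K)).congr_deriv (by simp)
  have hmono : MonotoneOn (fun t => G' t + K * (t - b)) (Set.Icc a b) :=
    monotoneOn_of_hasDerivWithinAt_nonneg (convex_Icc a b)
      (fun t _ => (hH' t).continuousAt.continuousWithinAt)
      (fun t _ => (hH' t).hasDerivWithinAt) fun t ht => by
        rw [interior_Icc] at ht; linarith [hK t (Set.Ioo_subset_Icc_self ht)]
  have hanti : AntitoneOn (fun t => G t + K / 2 * (t - b) ^ 2) (Set.Icc a b) :=
    antitoneOn_of_hasDerivWithinAt_nonpos (convex_Icc a b)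
      (fun t _ => (hH t).continuousAt.continuousWithinAt)
      (fun t _ => (hH t).hasDerivWithinAt) fun t ht => by
        rw [interior_Icc] at ht
        simpa [hb] using hmono (Set.Ioo_subset_Icc_self ht) (Set.right_mem_Icc.2 hab) ht.2.le
  have := hanti (Set.left_mem_Icc.2 hab) (Set.right_mem_Icc.2 hab) hab
  simp only [sub_self] at this
  nlinarith [this]

noncomputable def scaledSoftmaxLogLik {Ω ι κ : Type*} [MeasurableSpace Ω] [Fintype ι] [Fintype κ]
    (μ : Measure Ω) (w : κ → Ω → ι → ℝ) (ys : κ → ι) (t : ℝ) : ℝ :=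
  ∑ i, Real.log (∫ s, softmax (t • w i s) (ys i) ∂μ)

theorem scaledSoftmaxLogLik_sub_le_of_margin {Ω ι κ : Type*} [MeasurableSpace Ω] [Fintype ι]
    [Fintype κ] {μ : Measure Ω} [IsProbabilityMeasure μ] {w : κ → Ω → ι → ℝ} {ys : κ → ι}
    {D g a : ℝ} (hw : ∀ i, AEStronglyMeasurable (w i) μ)
    (hD : ∀ i s y y', |w i s y - w i s y'| ≤ D) (hg : 0 ≤ g)
    (hmargin : ∀ i s, ∃ ystar, ∀ y ≠ ystar, w i s y + g ≤ w i s ystar) (ha₀ : 0 ≤ a)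
    (ha₁ : a ≤ 1) (hmax : ∀ t, scaledSoftmaxLogLik μ w ys t ≤ scaledSoftmaxLogLik μ w ys 1) :
    scaledSoftmaxLogLik μ w ys 1 - scaledSoftmaxLogLik μ w ys a ≤
      Fintype.card κ * ((Fintype.card ι - 1 : ℕ) * D ^ 2 * Real.exp (-(a * g))) / 2
        * (1 - a) ^ 2 := by
  choose G' G'' hG' hG'' hK using fun i =>
    exists_hasDerivAt_log_integral_softmax_smul (hw i) (hD i) (ys i)
  have hL : ∀ t, HasDerivAt (scaledSoftmaxLogLik μ w ys) (∑ i, G' i t) t := fun t =>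
    HasDerivAt.fun_sum fun i _ => hG' i t
  have hL' : ∀ t, HasDerivAt (fun t => ∑ i, G' i t) (∑ i, G'' i t) t := fun t =>
    HasDerivAt.fun_sum fun i _ => hG'' i t
  have hmax' : IsLocalMax (scaledSoftmaxLogLik μ w ys) 1 := Filter.Eventually.of_forall hmax
  refine sub_le_of_deriv_eq_zero_of_le_deriv2 ha₁ hL hL' (hmax'.hasDerivAt_eq_zero (hL 1))
    fun t ht => ?_
  have hvar : ∀ i s, softmaxVar (t • w i s) (w i s)
      ≤ (Fintype.card ι - 1 : ℕ) * D ^ 2 * Real.exp (-(a * g)) := fun i s => by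
    obtain ⟨ystar, hstar⟩ := hmargin i s
    refine (softmaxVar_le_of_margin (ha₀.trans ht.1) (hD i s) hstar).trans ?_
    gcongr
    exact ht.1
  calc _ = ∑ _i : κ, -((Fintype.card ι - 1 : ℕ) * D ^ 2 * Real.exp (-(a * g))) := by simp
    _ ≤ ∑ i, G'' i t := Finset.sum_le_sum fun i _ => hK i t _ (hvar i)

lemma sum_sq_sub_le_of_abs_sub_le {ι : Type*} [Fintype ι] {u v : ι → ℝ} {r : ℝ} (hr : 0 ≤ r)
    (hu : ∀ y, 0 ≤ u y) (hv : ∀ y, 0 ≤ v y) (hu₁ : ∑ y, u y ≤ 1) (hv₁ : ∑ y, v y ≤ 1)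
    (h : ∀ y, |u y - v y| ≤ r) : ∑ y, (u y - v y) ^ 2 ≤ 2 * r := by
  have hterm : ∀ y, (u y - v y) ^ 2 ≤ r * u y + r * v y := fun y => by
    have h₁ : |u y - v y| ≤ u y + v y := (abs_sub _ _).trans
      (by rw [abs_of_nonneg (hu y), abs_of_nonneg (hv y)])
    rw [← sq_abs]
    nlinarith [abs_nonneg (u y - v y), h y]
  calc ∑ y, (u y - v y) ^ 2 ≤ r * ∑ y, u y + r * ∑ y, v y := by
        rw [Finset.mul_sum, Finset.mul_sum, ← Finset.sum_add_distrib]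
        exact Finset.sum_le_sum fun y _ => hterm y
    _ ≤ 2 * r := by nlinarith

lemma sum_sq_integral_softmax_sub_softmax_le {Ω ι : Type*} [MeasurableSpace Ω] [Fintype ι]
    {μ : Measure Ω} [IsProbabilityMeasure μ] {z : Ω → ι → ℝ} {z' : ι → ℝ} {ε : ℝ}
    (hz : ∀ y, Integrable (fun s => softmax (z s) y) μ) (hε : ∀ s, ‖z s - z'‖ ≤ ε) :
    ∑ y, ((∫ s, softmax (z s) y ∂μ) - softmax z' y) ^ 2 ≤ ε := by
  obtain ⟨s₀⟩ := nonempty_of_isProbabilityMeasure μ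
  have hclose : ∀ y, |(∫ s, softmax (z s) y ∂μ) - softmax z' y| ≤ ε / 2 := fun y => by
    have h : ∫ s, (softmax (z s) y - softmax z' y) ∂μ
        = (∫ s, softmax (z s) y ∂μ) - softmax z' y := by
      simp [integral_sub (hz y) (integrable_const _)]
    rw [← h]
    simpa using norm_integral_le_of_norm_le_const (μ := μ)
      (f := fun s => softmax (z s) y - softmax z' y) (ae_of_all _ fun s =>
        (abs_softmax_sub_softmax_le (z s) z' y).trans (by linarith [hε s]))
  have hsum : ∑ y, ∫ s, softmax (z s) y ∂μ ≤ 1 := by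
    rw [← integral_finsetSum _ fun y _ => hz y]
    exact (integral_mono (integrable_finsetSum _ fun y _ => hz y) (integrable_const 1)
      fun s => sum_softmax_le_one).trans (by simp)
  linarith [sum_sq_sub_le_of_abs_sub_le (by linarith [norm_nonneg (z s₀ - z'), hε s₀])
    (fun y => integral_nonneg fun s => softmax_nonneg y) (fun y => softmax_nonneg y) hsum
    sum_softmax_le_one hclose]

section Logits

noncomputable def logits {ι κ : Type*} [Fintype κ] (η : ι → κ → ℝ) (u : κ → ℝ) (y : ι) : ℝ :=
  ∑ j, η y j * u j

lemma logits_smul {ι κ : Type*} [Fintype κ] (t : ℝ) (η : ι → κ → ℝ) (u : κ → ℝ) :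
    logits (t • η) u = t • logits η u := by
  funext y
  simp only [logits, Pi.smul_apply, smul_eq_mul, Finset.mul_sum, mul_assoc]

lemma abs_logits_le {ι κ : Type*} [Fintype ι] [Fintype κ] (η : ι → κ → ℝ) (u : κ → ℝ) (y : ι) :
    |logits η u y| ≤ √(∑ y, ∑ j, η y j ^ 2) * √(∑ j, u j ^ 2) := by
  have hrow : √(∑ j, η y j ^ 2) ≤ √(∑ y, ∑ j, η y j ^ 2) :=
    Real.sqrt_le_sqrt (Finset.single_le_sum (f := fun y => ∑ j, η y j ^ 2)
      (fun y _ => Finset.sum_nonneg fun j _ => sq_nonneg (η y j)) (mem_univ y))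
  have hneg := Real.sum_mul_le_sqrt_mul_sqrt univ (fun j => -η y j) u
  simp only [neg_mul, Finset.sum_neg_distrib, neg_sq] at hneg
  have hpos := Real.sum_mul_le_sqrt_mul_sqrt univ (η y) u
  rw [logits, abs_le]
  constructor <;> nlinarith [Real.sqrt_nonneg (∑ j, u j ^ 2)]

lemma norm_sub_le_of_abs_le {ι : Type*} [Fintype ι] {u v : ι → ℝ} {B : ℝ} (hB : 0 ≤ B)
    (hu : ∀ y, |u y| ≤ B) (hv : ∀ y, |v y| ≤ B) : ‖u - v‖ ≤ 2 * B :=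
  (pi_norm_le_iff_of_nonneg (by positivity)).2 fun y => by
    rw [Pi.sub_apply, Real.norm_eq_abs, two_mul]
    exact (abs_sub _ _).trans (add_le_add (hu y) (hv y))

lemma aestronglyMeasurable_sub_apply_of_softmax {Ω ι : Type*} [MeasurableSpace Ω] [Fintype ι]
    {μ : Measure Ω} {z : Ω → ι → ℝ}
    (hz : ∀ y, AEStronglyMeasurable (fun s => softmax (z s) y) μ) (y₀ : ι) :
    AEStronglyMeasurable (fun s y => z s y - z s y₀) μ := by
  have h : (fun s y => z s y - z s y₀)
      = fun s y => Real.log (softmax (z s) y) - Real.log (softmax (z s) y₀) := by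
    funext s y
    rw [log_softmax_sub_log_softmax]
  rw [h]
  exact (aemeasurable_pi_lambda _ fun y =>
    ((hz y).aemeasurable.log).sub (hz y₀).aemeasurable.log).aestronglyMeasurable

variable {k d n : ℕ}

lemma smax_smul_eq_softmax (t : ℝ) (η : Fin k → Fin d → ℝ) (u : Fin d → ℝ) (r : ℝ) :
    smax (t • η) u = softmax (t • fun y => logits η u y - r) :=
  calc smax (t • η) u = softmax (t • logits η u) := congrArg softmax (logits_smul t η u)
    _ = softmax (fun y => (t • fun y => logits η u y - r) y + t * r) := by
      congr 1; funext y; simp only [Pi.smul_apply, smul_eq_mul]; ring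
    _ = _ := softmax_add_const _

variable {Ω : Type*} [MeasurableSpace Ω] {μ : Measure Ω} [IsProbabilityMeasure μ]
  {η : Fin k → Fin d → ℝ} {u : Fin n → Ω → Fin d → ℝ}

theorem sum_log_integral_smax_sub_le_of_margin {ys : Fin n → Fin k} {B g a : ℝ}
    (hu : ∀ i y, AEStronglyMeasurable (fun s => smax η (u i s) y) μ)
    (hB : ∀ i s y, |logits η (u i s) y| ≤ B) (hg : 0 ≤ g)
    (hmargin : ∀ i s, ∃ ystar, ∀ y ≠ ystar, logits η (u i s) y + g ≤ logits η (u i s) ystar)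
    (ha₀ : 0 ≤ a) (ha₁ : a ≤ 1)
    (hmax : ∀ t : ℝ, ∑ i, Real.log (∫ s, smax (t • η) (u i s) (ys i) ∂μ)
      ≤ ∑ i, Real.log (∫ s, smax η (u i s) (ys i) ∂μ)) :
    ∑ i, Real.log (∫ s, smax η (u i s) (ys i) ∂μ)
      - ∑ i, Real.log (∫ s, smax (a • η) (u i s) (ys i) ∂μ)
      ≤ n * ((k - 1 : ℕ) * (2 * B) ^ 2 * Real.exp (-(a * g))) / 2 * (1 - a) ^ 2 := by
  -- Recentring the logits at the observed label changes no probability and makes them measurable.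
  set w : Fin n → Ω → Fin k → ℝ := fun i s y => logits η (u i s) y - logits η (u i s) (ys i)
  have hL : ∀ t : ℝ, ∑ i, Real.log (∫ s, smax (t • η) (u i s) (ys i) ∂μ)
      = scaledSoftmaxLogLik μ w ys t := fun t =>
    Finset.sum_congr rfl fun i _ => congrArg Real.log
      (integral_congr_ae (ae_of_all _ fun s => congrFun (smax_smul_eq_softmax t η _ _) (ys i)))
  have hL₁ := hL 1
  rw [one_smul] at hL₁
  rw [hL₁, hL]
  rw [hL₁] at hmax
  simpa using scaledSoftmaxLogLik_sub_le_of_margin (w := w) (D := 2 * B)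
    (fun i => aestronglyMeasurable_sub_apply_of_softmax (hu i) (ys i))
    (fun i s y y' => by
      simp only [w, sub_sub_sub_cancel_right]
      exact (abs_sub _ _).trans (by rw [two_mul]; exact add_le_add (hB i s y) (hB i s y')))
    hg (fun i s => (hmargin i s).imp fun _ h y hy => by simp only [w]; linarith [h y hy])
    ha₀ ha₁ fun t => (hL t).symm.trans_le (hmax t)

lemma inv_mul_sum_sum_sq_integral_smax_smul_sub_le {v : Fin n → Fin d → ℝ} {a B : ℝ}
    (ha : 0 ≤ a) (hB₀ : 0 ≤ B) (hu : ∀ i y, Integrable (fun s => smax (a • η) (u i s) y) μ)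
    (huB : ∀ i s y, |logits η (u i s) y| ≤ B) (hvB : ∀ i y, |logits η (v i) y| ≤ B) :
    (n : ℝ)⁻¹ * ∑ i, ∑ y, ((∫ s, smax (a • η) (u i s) y ∂μ) - smax (a • η) (v i) y) ^ 2
      ≤ a * (2 * B) :=
  calc _ ≤ (n : ℝ)⁻¹ * ∑ _i : Fin n, a * (2 * B) := by
        gcongr with i
        refine sum_sq_integral_softmax_sub_softmax_le (hu i) fun s => ?_
        change ‖logits (a • η) (u i s) - logits (a • η) (v i)‖ ≤ _
        rw [logits_smul, logits_smul, ← smul_sub, norm_smul, Real.norm_of_nonneg ha]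
        exact mul_le_mul_of_nonneg_left (norm_sub_le_of_abs_le hB₀ (huB i s) (hvB i)) ha
    _ = (n : ℝ)⁻¹ * n * (a * (2 * B)) := by simp [mul_assoc]
    _ ≤ a * (2 * B) := mul_le_of_le_one_left (by positivity) inv_mul_le_one

end Logits

lemma sub_one_le_mul_mul_sub_one_mul {d k b : ℕ} (hd : d ≠ 0) :
    k - 1 ≤ d * k * (k - 1) * (b + 1) := by
  rcases Nat.eq_zero_or_pos (k - 1) with h | h
  · simp [h]
  · calc k - 1 = 1 * 1 * (k - 1) * 1 := by ring
      _ ≤ d * k * (k - 1) * (b + 1) := by gcongr <;> omega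

theorem likelihood_gap_margin_bound_general {Λ 𝒳 Ωs : Type*} [MeasurableSpace Ωs]
    (Ps : Measure Ωs) [IsProbabilityMeasure Ps]
    (k d n b : ℕ)
    (β c δ : ℝ) (hβ : 0 < β) (hδ : 0 < δ) (hc : 0 ≤ c)
    -- stochastic and deterministic penultimate feature maps, indexed by λ ∈ Λ
    (feat : Λ → 𝒳 → Ωs → Fin d → ℝ) (featDet : Λ → 𝒳 → Fin d → ℝ)
    -- training data
    (xs : Fin n → 𝒳) (ys : Fin n → Fin k)
    -- integrability of the conditional likelihoods
    (hint : ∀ (θ : Λ × (Fin k → Fin d → ℝ)) (y : Fin k) (x : 𝒳),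
      Integrable (fun s => smax θ.2 (feat θ.1 x s) y) Ps)
    -- log-likelihood and expectation-linearization penalty
    (l : Λ × (Fin k → Fin d → ℝ) → ℝ)
    (hl : ∀ θ, l θ = ∑ i,
      Real.log (∫ s, smax θ.2 (feat θ.1 (xs i) s) (ys i) ∂Ps))
    (V : Λ × (Fin k → Fin d → ℝ) → ℝ)
    (hV : ∀ θ, V θ = (n : ℝ)⁻¹ * ∑ i, ∑ y,
      ((∫ s, smax θ.2 (feat θ.1 (xs i) s) y ∂Ps) -
        smax θ.2 (featDet θ.1 (xs i)) y) ^ 2)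
    -- the unconstrained MLE θ̂ = (λ̂, η̂)
    (lamh : Λ) (ηh : Fin k → Fin d → ℝ)
    (hMLE : ∀ θ, l θ ≤ l (lamh, ηh))
    -- the constrained MLE θ̂_δ
    (θδ : Λ × (Fin k → Fin d → ℝ))
    (hθδ2 : ∀ θ, V θ ≤ δ → l θ ≤ l θδ)
    -- ‖η̂‖₂ and the constraint-feasibility condition δ/(4β) ≤ ‖η̂‖₂
    (ηnorm : ℝ) (hηnorm : ηnorm = Real.sqrt (∑ y, ∑ i, (ηh y i) ^ 2))
    (hfeas : δ / (4 * β) ≤ ηnorm)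
    -- penultimate features bounded by β at λ̂
    (hfb1 : ∀ x s, Real.sqrt (∑ i, (feat lamh x s i) ^ 2) ≤ β)
    (hfb2 : ∀ x, Real.sqrt (∑ i, (featDet lamh x i) ^ 2) ≤ β)
    -- unique-best-prediction margin c at θ̂
    (hmargin : ∀ i s, ∃ ystar : Fin k, ∀ y, y ≠ ystar →
      (∑ j, ηh y j * feat lamh (xs i) s j) + c * ηnorm <
        ∑ j, ηh ystar j * feat lamh (xs i) s j) :
    (n : ℝ)⁻¹ * (l (lamh, ηh) - l θδ) ≤
      (2 * (d : ℝ) * k * ((k - 1 : ℕ) : ℝ) * ((b : ℝ) + 1)) * β ^ 2 *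
        (ηnorm - δ / (4 * β)) ^ 2 * Real.exp (-(c * δ / (4 * β))) := by
  have hN : 0 < ηnorm := (by positivity : 0 < δ / (4 * β)).trans_le hfeas
  have hd : d ≠ 0 := by rintro rfl; simp at hηnorm; linarith
  have hlogits : ∀ u : Fin d → ℝ, √(∑ j, u j ^ 2) ≤ β → ∀ y, |logits ηh u y| ≤ β * ηnorm :=
    fun u hu y => (abs_logits_le ηh u y).trans (by rw [← hηnorm, mul_comm]; gcongr)
  set a := δ / (4 * β) / ηnorm
  have haN : a * ηnorm = δ / (4 * β) := div_mul_cancel₀ _ hN.ne'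
  have hfeasible : V (lamh, a • ηh) ≤ δ := by
    refine (hV _).trans_le ((inv_mul_sum_sum_sq_integral_smax_smul_sub_le (η := ηh)
      (u := fun i s => feat lamh (xs i) s) (v := fun i => featDet lamh (xs i)) (by positivity)
      (by positivity) (fun i y => hint (lamh, a • ηh) y (xs i)) (fun i s => hlogits _ (hfb1 _ s))
      (fun i => hlogits _ (hfb2 _))).trans ?_)
    have : a * (2 * (β * ηnorm)) = δ / 2 := by simp only [a]; field_simp; ring
    linarith
  have hgap := sum_log_integral_smax_sub_le_of_margin (μ := Ps) (η := ηh)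
    (u := fun i s => feat lamh (xs i) s) (ys := ys) (g := c * ηnorm) (a := a)
    (fun i y => (hint (lamh, ηh) y (xs i)).1) (fun i s => hlogits _ (hfb1 _ s)) (by positivity)
    (fun i s => (hmargin i s).imp fun _ h y hy => (h y hy).le) (by positivity)
    ((div_le_one hN).2 hfeas) fun t => by simpa only [hl] using hMLE (lamh, t • ηh)
  have hgap' : l (lamh, ηh) - l (lamh, a • ηh) ≤ n * (2 * (k - 1 : ℕ) * (β ^ 2
      * (ηnorm - δ / (4 * β)) ^ 2 * Real.exp (-(c * δ / (4 * β))))) := by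
    rw [hl, hl, mul_div_assoc, ← haN]
    exact hgap.trans_eq (by ring_nf)
  calc (n : ℝ)⁻¹ * (l (lamh, ηh) - l θδ) ≤ (n : ℝ)⁻¹ * (n * (2 * (k - 1 : ℕ) * (β ^ 2
        * (ηnorm - δ / (4 * β)) ^ 2 * Real.exp (-(c * δ / (4 * β)))))) := by
        gcongr
        linarith [hθδ2 _ hfeasible]
    _ ≤ 2 * (k - 1 : ℕ) * (β ^ 2 * (ηnorm - δ / (4 * β)) ^ 2
          * Real.exp (-(c * δ / (4 * β)))) := by
        rw [← mul_assoc]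
        exact mul_le_of_le_one_left (by positivity) inv_mul_le_one
    _ ≤ 2 * (d * k * (k - 1 : ℕ) * (b + 1) : ℕ) * (β ^ 2 * (ηnorm - δ / (4 * β)) ^ 2
          * Real.exp (-(c * δ / (4 * β)))) := by
        gcongr
        exact sub_one_le_mul_mul_sub_one_mul hd
    _ = _ := by push_cast; ring

/-- likelihood gap of the expectation-linearized MLE, margin case:
under a unique-best-prediction margin `c`, bounded penultimate features, and marginal
probabilities bounded below by `1/b`, the likelihood gap between the MLE `θ̂ = (λ̂, η̂)`
and the MLE `θ̂_δ` constrained to `V(D;θ) ≤ δ` satisfies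
`Δ_l ≤ c₁ β² (‖η̂‖₂ - δ/(4β))² e^{-c₂ δ/(4β)}` with `c₁ = 2dk(k-1)(b+1)`, `c₂ = c`. -/
theorem likelihood_gap_margin_bound {Λ 𝒳 Ωs : Type*} [MeasurableSpace Ωs]
    (Ps : Measure Ωs) [IsProbabilityMeasure Ps]
    (k d n b : ℕ) (hk : 0 < k) (hn : 0 < n) (hbk : k ≤ b)
    (β c δ : ℝ) (hβ : 0 < β) (hδ : 0 < δ) (hc : 0 ≤ c)
    -- stochastic and deterministic penultimate feature maps, indexed by λ ∈ Λ
    (feat : Λ → 𝒳 → Ωs → Fin d → ℝ) (featDet : Λ → 𝒳 → Fin d → ℝ)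
    -- training data
    (xs : Fin n → 𝒳) (ys : Fin n → Fin k)
    -- integrability of the conditional likelihoods
    (hint : ∀ (θ : Λ × (Fin k → Fin d → ℝ)) (y : Fin k) (x : 𝒳),
      Integrable (fun s => smax θ.2 (feat θ.1 x s) y) Ps)
    -- log-likelihood and expectation-linearization penalty
    (l : Λ × (Fin k → Fin d → ℝ) → ℝ)
    (hl : ∀ θ, l θ = ∑ i,
      Real.log (∫ s, smax θ.2 (feat θ.1 (xs i) s) (ys i) ∂Ps))
    (V : Λ × (Fin k → Fin d → ℝ) → ℝ)
    (hV : ∀ θ, V θ = (n : ℝ)⁻¹ * ∑ i, ∑ y,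
      ((∫ s, smax θ.2 (feat θ.1 (xs i) s) y ∂Ps) -
        smax θ.2 (featDet θ.1 (xs i)) y) ^ 2)
    -- the unconstrained MLE θ̂ = (λ̂, η̂)
    (lamh : Λ) (ηh : Fin k → Fin d → ℝ)
    (hMLE : ∀ θ, l θ ≤ l (lamh, ηh))
    -- the constrained MLE θ̂_δ
    (θδ : Λ × (Fin k → Fin d → ℝ))
    (hθδ1 : V θδ ≤ δ) (hθδ2 : ∀ θ, V θ ≤ δ → l θ ≤ l θδ)
    -- ‖η̂‖₂ and the constraint-feasibility condition δ/(4β) ≤ ‖η̂‖₂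
    (ηnorm : ℝ) (hηnorm : ηnorm = Real.sqrt (∑ y, ∑ i, (ηh y i) ^ 2))
    (hfeas : δ / (4 * β) ≤ ηnorm)
    -- penultimate features bounded by β at λ̂
    (hfb1 : ∀ x s, Real.sqrt (∑ i, (feat lamh x s i) ^ 2) ≤ β)
    (hfb2 : ∀ x, Real.sqrt (∑ i, (featDet lamh x i) ^ 2) ≤ β)
    -- unique-best-prediction margin c at θ̂
    (hmargin : ∀ i s, ∃ ystar : Fin k, ∀ y, y ≠ ystar →
      (∑ j, ηh y j * feat lamh (xs i) s j) + c * ηnorm <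
        ∑ j, ηh ystar j * feat lamh (xs i) s j)
    -- marginal probabilities bounded below by 1/b at θ̂
    (hmarg : ∀ i y, (1 : ℝ) / b ≤ ∫ s, smax ηh (feat lamh (xs i) s) y ∂Ps) :
    (n : ℝ)⁻¹ * (l (lamh, ηh) - l θδ) ≤
      (2 * (d : ℝ) * k * ((k - 1 : ℕ) : ℝ) * ((b : ℝ) + 1)) * β ^ 2 *
        (ηnorm - δ / (4 * β)) ^ 2 * Real.exp (-(c * δ / (4 * β))) :=
  likelihood_gap_margin_bound_general Ps k d n b β c δ hβ hδ hc feat featDet xs ys hint l hl V hV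
    lamh ηh hMLE θδ hθδ2 ηnorm hηnorm hfeas hfb1 hfb2 hmargin
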